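/- arXiv:math/9803117 — 4 statements merged into one kernel-verified Lean document; each statement's English description precedes it below -/
import Mathlib

section
/- Let V be a complex Banach space, Ω ⊆ V an open set, and (h_j)_{j≥1} a sequence of holomorphic functions Ω → ℂ such that the partial sums ∑_{j=1}^n |h_j(z)| are bounded by a constant M uniformly in n and z ∈ Ω. Then the series ∑_{j=1}^∞ |h_j| converges uniformly on every compact subset of Ω. -/
open Set
open scoped ENNReal NNReal

noncomputable section

/-- `l¹`: the space of absolutely summable sequences of complex numbers. -/
abbrev L1 : Type := lp (fun _ : ℕ => ℂ) 1

/-- `ℂ^N` equipped with the `l¹` norm. -/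
abbrev EN (N : ℕ) : Type := PiLp 1 (fun _ : Fin N => ℂ)

/-- The `(0,1)`-part of the real Fréchet derivative of `u` at `z`, applied to `ξ`:
`∂̄u(z)(ξ) = (Du(z)(ξ) + i·Du(z)(iξ))/2`. -/
noncomputable def dbar {V : Type*} [NormedAddCommGroup V] [NormedSpace ℂ V]
    (u : V → ℂ) (z ξ : V) : ℂ :=
  (fderiv ℝ u z ξ + Complex.I * fderiv ℝ u z (Complex.I • ξ)) / 2

/-- `f` is a `(0,1)`-form of class `C^m` on `Ω`: each `f z` is (continuous) conjugate-linear
and `(z,ξ) ↦ f z ξ` is `m` times continuously differentiable in the real sense on `Ω × V`. -/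
def IsForm01 {V : Type*} [NormedAddCommGroup V] [NormedSpace ℂ V]
    (m : ℕ) (Ω : Set V) (f : V → V → ℂ) : Prop :=
  (∀ z ∈ Ω, ∀ ξ η : V, f z (ξ + η) = f z ξ + f z η) ∧
  (∀ z ∈ Ω, ∀ (a : ℂ) (ξ : V), f z (a • ξ) = (starRingEnd ℂ) a * f z ξ) ∧
  ContDiffOn ℝ m (fun p : V × V => f p.1 p.2) (Ω ×ˢ (univ : Set V))

/-- A `(0,1)`-form `f` is `∂̄`-closed on `Ω`. -/
def DbarClosed {V : Type*} [NormedAddCommGroup V] [NormedSpace ℂ V]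
    (Ω : Set V) (f : V → V → ℂ) : Prop :=
  ∀ z ∈ Ω, ∀ ξ η : V, dbar (fun w => f w ξ) z η = dbar (fun w => f w η) z ξ

/-- The set of values `‖f z ξ‖`, `z ∈ A`, `‖ξ‖ ≤ 1`; its sup is `|f|_{0,A}`. -/
def formSet0 {V : Type*} [NormedAddCommGroup V]
    (f : V → V → ℂ) (A : Set V) : Set ℝ :=
  {x | ∃ z ∈ A, ∃ ξ : V, ‖ξ‖ ≤ 1 ∧ x = ‖f z ξ‖}

/-- The set of difference quotients `‖f z ξ - f w ξ‖/‖z-w‖`; its sup is `|f|_{1,A}`. -/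
def formSet1 {V : Type*} [NormedAddCommGroup V]
    (f : V → V → ℂ) (A : Set V) : Set ℝ :=
  {x | ∃ z ∈ A, ∃ w ∈ A, z ≠ w ∧ ∃ ξ : V, ‖ξ‖ ≤ 1 ∧ x = ‖f z ξ - f w ξ‖ / ‖z - w‖}

/-- `|f|_{0,A}`. -/
noncomputable def formNorm0 {V : Type*} [NormedAddCommGroup V]
    (f : V → V → ℂ) (A : Set V) : ℝ := sSup (formSet0 f A)

/-- `|f|_{1,A}`. -/
noncomputable def formNorm1 {V : Type*} [NormedAddCommGroup V]
    (f : V → V → ℂ) (A : Set V) : ℝ := sSup (formSet1 f A)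

/-- `f` is Lipschitz continuous on `A`: `|f|_{0,A} < ∞` and `|f|_{1,A} < ∞`. -/
def LipschitzForm {V : Type*} [NormedAddCommGroup V]
    (f : V → V → ℂ) (A : Set V) : Prop :=
  BddAbove (formSet0 f A) ∧ BddAbove (formSet1 f A)

/-- `‖k‖ = ∑_ν k_ν` for a multiindex `k`. -/
def knormN (k : ℕ →₀ ℕ) : ℕ := k.sum fun _ m => m

/-- `k^k = ∏_ν k_ν^{k_ν}` (with `0^0 = 1`). -/
noncomputable def kk (k : ℕ →₀ ℕ) : ℝ := ∏ ν ∈ k.support, (k ν : ℝ) ^ k ν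

/-- `‖k‖^{‖k‖}` (with `0^0 = 1`). -/
noncomputable def nn (k : ℕ →₀ ℕ) : ℝ := ((knormN k : ℝ)) ^ knormN k

/-- The monomial `z^k = ∏_ν z_ν^{k_ν}` (with `0^0 = 1`). -/
noncomputable def monom (k : ℕ →₀ ℕ) (z : ℕ → ℂ) : ℂ := ∏ ν ∈ k.support, z ν ^ k ν

/-- The term of the series defining `Δ(q,z)` corresponding to the multiindex `k`:
`(‖k‖^{‖k‖}/k^k)·|q|^{#k}·|z^k|`. -/
noncomputable def DeltaTerm (q : ℂ) (z : ℕ → ℂ) (k : ℕ →₀ ℕ) : ℝ :=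
  (nn k / kk k) * ‖q‖ ^ k.support.card * ∏ ν ∈ k.support, ‖z ν‖ ^ k ν

/-- `Δ(q,z) = ∑_k (‖k‖^{‖k‖}/k^k)·|q|^{#k}·|z^k|`. -/
noncomputable def Delta (q : ℂ) (z : ℕ → ℂ) : ℝ := ∑' k, DeltaTerm q z k

open Metric Filter Real Topology

-- kernel estimate on the unit circle
lemma kernel_est {ζ a : ℂ} (hζ : ‖ζ‖ = 1) (ha : ‖a‖ ≤ 1/2) :
    ‖(ζ - a)⁻¹ - ζ⁻¹‖ ≤ 2 * ‖a‖ := by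
  have hζa : (1:ℝ)/2 ≤ ‖ζ - a‖ := by
    have := norm_sub_norm_le ζ a  -- ‖ζ‖ - ‖a‖ ≤ ‖ζ - a‖
    linarith
  have hζ0 : ζ ≠ 0 := by intro h; rw [h] at hζ; simp at hζ
  have hζa0 : ζ - a ≠ 0 := by intro h; rw [h] at hζa; simp at hζa; linarith
  have hid : (ζ - a)⁻¹ - ζ⁻¹ = a / ((ζ - a) * ζ) := by field_simp; ring
  rw [hid]
  rw [norm_div, norm_mul, hζ, mul_one]
  rw [div_le_iff₀ (by linarith : (0:ℝ) < ‖ζ - a‖)]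
  calc ‖a‖ = ‖a‖ * 1 := (mul_one _).symm
    _ ≤ 2 * ‖a‖ * ‖ζ - a‖ := by nlinarith [norm_nonneg a]

-- per-function Cauchy estimate
lemma cauchy_est {g : ℂ → ℂ} (hg : DiffContOnCl ℂ g (ball 0 1)) {a : ℂ} (ha : ‖a‖ ≤ 1/2) :
    ‖g a - g 0‖ ≤ (2*π)⁻¹ * ∫ θ in (0:ℝ)..(2*π), 2 * ‖a‖ * ‖g (circleMap 0 1 θ)‖ := by
  have h0 : (0:ℂ) ∈ ball (0:ℂ) 1 := by simp
  have haB : a ∈ ball (0:ℂ) 1 := by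
    simp only [mem_ball, dist_zero_right]; linarith
  have hgc : ContinuousOn g (closedBall (0:ℂ) 1) := by
    have := hg.continuousOn
    rwa [closure_ball (0:ℂ) one_ne_zero] at this
  have intA : CircleIntegrable (fun ζ => (ζ - a)⁻¹ • g ζ) 0 1 := by
    apply ContinuousOn.circleIntegrable zero_le_one
    apply ContinuousOn.fun_smul
    · apply ContinuousOn.inv₀ (by fun_prop)
      intro ζ hζ
      simp only [mem_sphere_iff_norm, sub_zero] at hζ
      intro h
      rw [sub_eq_zero] at h
      rw [h] at hζ; rw [hζ] at ha; linarith
    · exact hgc.mono sphere_subset_closedBall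
  have int0 : CircleIntegrable (fun ζ => ζ⁻¹ • g ζ) 0 1 := by
    apply ContinuousOn.circleIntegrable zero_le_one
    apply ContinuousOn.fun_smul
    · apply ContinuousOn.inv₀ (by fun_prop)
      intro ζ hζ
      simp only [mem_sphere_iff_norm, sub_zero] at hζ
      intro h; rw [h] at hζ; simp at hζ
    · exact hgc.mono sphere_subset_closedBall
  have hCa := hg.circleIntegral_sub_inv_smul haB
  have hC0 := hg.circleIntegral_sub_inv_smul h0
  simp only [sub_zero] at hC0
  have key : (∮ ζ in C(0,1), ((ζ - a)⁻¹ - ζ⁻¹) • g ζ)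
      = (2 * π * Complex.I) • (g a - g 0) := by
    have : (∮ ζ in C(0,1), ((ζ - a)⁻¹ - ζ⁻¹) • g ζ)
        = (∮ ζ in C(0,1), ((ζ - a)⁻¹ • g ζ - ζ⁻¹ • g ζ)) := by
      congr 1; funext ζ; rw [sub_smul]
    rw [this, circleIntegral.integral_sub intA int0, hCa, hC0, ← smul_sub]
  have hnorm : ‖(2 * ↑π * Complex.I) • (g a - g 0)‖ = (2*π) * ‖g a - g 0‖ := by
    rw [norm_smul]
    congr 1
    simp [abs_of_pos Real.pi_pos]
  have hbound : ‖∮ ζ in C(0,1), ((ζ - a)⁻¹ - ζ⁻¹) • g ζ‖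
      ≤ ∫ θ in (0:ℝ)..(2*π), 2 * ‖a‖ * ‖g (circleMap 0 1 θ)‖ := by
    rw [circleIntegral]
    have habs : |∫ θ in (0:ℝ)..(2*π), 2 * ‖a‖ * ‖g (circleMap 0 1 θ)‖|
        = ∫ θ in (0:ℝ)..(2*π), 2 * ‖a‖ * ‖g (circleMap 0 1 θ)‖ := by
      apply abs_of_nonneg
      apply intervalIntegral.integral_nonneg Real.two_pi_pos.le
      intro θ _; positivity
    rw [← habs]
    apply intervalIntegral.norm_integral_le_abs_of_norm_le
    · apply Filter.Eventually.of_forall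
      intro θ
      rw [norm_smul, deriv_circleMap]
      have h1 : ‖circleMap 0 1 θ * Complex.I‖ = 1 := by
        simp
      rw [h1, one_mul, norm_smul]
      have h2 : ‖circleMap 0 1 θ‖ = 1 := by simp
      have := kernel_est h2 ha
      have hgn : (0:ℝ) ≤ ‖g (circleMap 0 1 θ)‖ := norm_nonneg _
      calc ‖(circleMap 0 1 θ - a)⁻¹ - (circleMap 0 1 θ)⁻¹‖ * ‖g (circleMap 0 1 θ)‖
          ≤ (2 * ‖a‖) * ‖g (circleMap 0 1 θ)‖ := by apply mul_le_mul_of_nonneg_right this hgn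
        _ = 2 * ‖a‖ * ‖g (circleMap 0 1 θ)‖ := by ring
    · apply Continuous.intervalIntegrable
      apply Continuous.mul continuous_const
      apply Continuous.norm
      exact hgc.comp_continuous (by fun_prop) (fun θ => by
        simp [mem_closedBall, Complex.dist_eq])
  calc ‖g a - g 0‖ = (2*π)⁻¹ * ((2*π) * ‖g a - g 0‖) := by
        field_simp
    _ = (2*π)⁻¹ * ‖∮ ζ in C(0,1), ((ζ - a)⁻¹ - ζ⁻¹) • g ζ‖ := by rw [key, hnorm]
    _ ≤ (2*π)⁻¹ * ∫ θ in (0:ℝ)..(2*π), 2 * ‖a‖ * ‖g (circleMap 0 1 θ)‖ := by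
        apply mul_le_mul_of_nonneg_left hbound
        positivity

lemma key_est {V : Type*} [NormedAddCommGroup V] [NormedSpace ℂ V]
    (Ω : Set V) (h : ℕ → V → ℂ) (hol : ∀ j, DifferentiableOn ℂ (h j) Ω)
    (M : ℝ) (hM : ∀ n : ℕ, ∀ z ∈ Ω, ∑ j ∈ Finset.range n, ‖h j z‖ ≤ M)
    {z₀ : V} {r : ℝ} (hr : 0 < r) (hball : closedBall z₀ r ⊆ Ω)
    {z : V} (hz : ‖z - z₀‖ ≤ r/2) (n : ℕ) :
    |∑ j ∈ Finset.range n, ‖h j z‖ - ∑ j ∈ Finset.range n, ‖h j z₀‖|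
      ≤ 2 * M * (‖z - z₀‖ / r) := by
  by_cases hzz : z = z₀
  · simp [hzz]
  have hu0 : ‖z - z₀‖ ≠ 0 := by
    simp only [ne_eq, norm_eq_zero, sub_eq_zero]; exact hzz
  have hupos : 0 < ‖z - z₀‖ := lt_of_le_of_ne (norm_nonneg _) (Ne.symm hu0)
  set u : V := z - z₀ with hu_def
  set a : ℝ := ‖u‖ / r with ha_def
  have ha0 : 0 < a := div_pos hupos hr
  have ha2 : a ≤ 1/2 := by
    rw [ha_def, div_le_iff₀ hr]; linarith
  set v : V := ((r / ‖u‖ : ℝ) : ℂ) • u with hv_def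
  have hv : ‖v‖ = r := by
    rw [hv_def, norm_smul, Complex.norm_real, Real.norm_eq_abs,
      abs_of_pos (div_pos hr hupos), div_mul_cancel₀ _ hu0]
  have hzv : z₀ + ((a : ℝ) : ℂ) • v = z := by
    rw [hv_def, smul_smul, ← Complex.ofReal_mul]
    have : a * (r / ‖u‖) = 1 := by
      rw [ha_def]; field_simp
    rw [this, Complex.ofReal_one, one_smul, hu_def]
    abel
  have hmem : ∀ ζ : ℂ, ‖ζ‖ ≤ 1 → z₀ + ζ • v ∈ Ω := by
    intro ζ hζ
    apply hball
    simp only [mem_closedBall, dist_eq_norm, add_sub_cancel_left, norm_smul, hv]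
    calc ‖ζ‖ * r ≤ 1 * r := by apply mul_le_mul_of_nonneg_right hζ hr.le
      _ = r := one_mul r
  have hg : ∀ j, DiffContOnCl ℂ (fun ζ : ℂ => h j (z₀ + ζ • v)) (ball 0 1) := by
    intro j
    apply DifferentiableOn.diffContOnCl
    rw [closure_ball (0:ℂ) one_ne_zero]
    apply DifferentiableOn.comp (hol j)
      (((differentiable_id.smul_const v).const_add z₀).differentiableOn)
    intro ζ hζ
    simp only [mem_closedBall, dist_zero_right] at hζ
    exact hmem ζ hζ
  set φ : ℕ → ℝ → ℝ := fun j θ => 2 * a * ‖h j (z₀ + circleMap 0 1 θ • v)‖ with hφ_def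
  have hmemθ : ∀ θ : ℝ, z₀ + circleMap 0 1 θ • v ∈ Ω := fun θ =>
    hmem _ (by simp)
  have hφc : ∀ j, Continuous (φ j) := by
    intro j
    apply Continuous.mul continuous_const
    apply Continuous.norm
    exact (hol j).continuousOn.comp_continuous (by fun_prop) hmemθ
  have hφint : ∀ j, IntervalIntegrable (φ j) MeasureTheory.volume 0 (2*π) :=
    fun j => (hφc j).intervalIntegrable _ _
  have hj : ∀ j, ‖h j z - h j z₀‖ ≤ (2*π)⁻¹ * ∫ θ in (0:ℝ)..(2*π), φ j θ := by
    intro j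
    have hna : ‖((a:ℝ):ℂ)‖ = a := by
      rw [Complex.norm_real, Real.norm_eq_abs, abs_of_pos ha0]
    have := cauchy_est (hg j) (a := ((a:ℝ):ℂ)) (by rw [hna]; exact ha2)
    simp only [hzv, zero_smul, add_zero, hna] at this
    exact this
  have hsum_int : ∑ j ∈ Finset.range n, ∫ θ in (0:ℝ)..(2*π), φ j θ
      = ∫ θ in (0:ℝ)..(2*π), ∑ j ∈ Finset.range n, φ j θ :=
    (intervalIntegral.integral_finset_sum (fun j _ => hφint j)).symm
  have hptbound : ∀ θ ∈ Set.uIcc (0:ℝ) (2*π),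
      ∑ j ∈ Finset.range n, φ j θ ≤ 2 * a * M := by
    intro θ _
    rw [hφ_def]
    simp only
    rw [← Finset.mul_sum]
    apply mul_le_mul_of_nonneg_left (hM n _ (hmemθ θ)) (by positivity)
  have hint_bound : ∫ θ in (0:ℝ)..(2*π), ∑ j ∈ Finset.range n, φ j θ
      ≤ 2*π * (2 * a * M) := by
    calc ∫ θ in (0:ℝ)..(2*π), ∑ j ∈ Finset.range n, φ j θ
        ≤ ∫ _θ in (0:ℝ)..(2*π), 2 * a * M := by
          apply intervalIntegral.integral_mono_on
            (f := fun θ => ∑ j ∈ Finset.range n, φ j θ)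
            (g := fun _θ => 2 * a * M) Real.two_pi_pos.le
            ((continuous_finset_sum _ (fun j _ => hφc j)).intervalIntegrable _ _)
            (intervalIntegrable_const)
          intro θ hθ
          exact hptbound θ (by rw [Set.uIcc_of_le Real.two_pi_pos.le]; exact hθ)
      _ = 2*π * (2 * a * M) := by
          rw [intervalIntegral.integral_const, smul_eq_mul, sub_zero]
  calc |∑ j ∈ Finset.range n, ‖h j z‖ - ∑ j ∈ Finset.range n, ‖h j z₀‖|
      = |∑ j ∈ Finset.range n, (‖h j z‖ - ‖h j z₀‖)| := by rw [Finset.sum_sub_distrib]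
    _ ≤ ∑ j ∈ Finset.range n, |‖h j z‖ - ‖h j z₀‖| := Finset.abs_sum_le_sum_abs _ _
    _ ≤ ∑ j ∈ Finset.range n, ‖h j z - h j z₀‖ :=
        Finset.sum_le_sum (fun j _ => abs_norm_sub_norm_le _ _)
    _ ≤ ∑ j ∈ Finset.range n, (2*π)⁻¹ * ∫ θ in (0:ℝ)..(2*π), φ j θ :=
        Finset.sum_le_sum (fun j _ => hj j)
    _ = (2*π)⁻¹ * ∑ j ∈ Finset.range n, ∫ θ in (0:ℝ)..(2*π), φ j θ := by
        rw [Finset.mul_sum]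
    _ = (2*π)⁻¹ * ∫ θ in (0:ℝ)..(2*π), ∑ j ∈ Finset.range n, φ j θ := by rw [hsum_int]
    _ ≤ (2*π)⁻¹ * (2*π * (2 * a * M)) := by
        apply mul_le_mul_of_nonneg_left hint_bound (by positivity)
    _ = 2 * M * a := by
        have : (2*π) ≠ 0 := by positivity
        field_simp
    _ = 2 * M * (‖z - z₀‖ / r) := by rw [ha_def, hu_def]

/-- Let `V` be a complex Banach space, `Ω ⊆ V` open, and `(h_j)` a sequence of
holomorphic functions on `Ω` whose partial sums `∑_{j<n} |h_j(z)|` are uniformly bounded by `M`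
on `Ω`. Then `∑_j |h_j|` converges uniformly on every compact subset of `Ω`. -/
theorem statement4 {V : Type*} [NormedAddCommGroup V] [NormedSpace ℂ V] [CompleteSpace V]
    (Ω : Set V) (hΩ : IsOpen Ω) (h : ℕ → V → ℂ)
    (hol : ∀ j, DifferentiableOn ℂ (h j) Ω)
    (M : ℝ) (hM : ∀ n : ℕ, ∀ z ∈ Ω, ∑ j ∈ Finset.range n, ‖h j z‖ ≤ M) :
    ∀ K ⊆ Ω, IsCompact K →
      TendstoUniformlyOn (fun n z => ∑ j ∈ Finset.range n, ‖h j z‖)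
        (fun z => ∑' j, ‖h j z‖) Filter.atTop K := by
  intro K hKΩ hK
  set F : ℕ → V → ℝ := fun n z => ∑ j ∈ Finset.range n, ‖h j z‖ with hF_def
  set f : V → ℝ := fun z => ∑' j, ‖h j z‖ with hf_def
  have hsummable : ∀ z ∈ Ω, Summable fun j => ‖h j z‖ := fun z hz =>
    summable_of_sum_range_le (fun j => norm_nonneg _) (fun n => hM n z hz)
  have hpt : ∀ z ∈ Ω, Tendsto (fun n => F n z) atTop (𝓝 (f z)) :=
    fun z hz => (hsummable z hz).hasSum.tendsto_sum_nat
  have heqc : EquicontinuousOn F K := by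
    intro z₀ hz₀ U hU
    rcases mem_uniformity_dist.mp hU with ⟨ε, hε, hεU⟩
    have hz₀Ω : z₀ ∈ Ω := hKΩ hz₀
    obtain ⟨r', hr', hball'⟩ := Metric.isOpen_iff.mp hΩ z₀ hz₀Ω
    have hr : 0 < r'/2 := by linarith
    have hball : closedBall z₀ (r'/2) ⊆ Ω := by
      intro x hx
      apply hball'
      rw [mem_closedBall] at hx
      rw [mem_ball]
      linarith
    have hM0 : 0 ≤ M := by simpa using hM 0 z₀ hz₀Ω
    set δ : ℝ := min (r'/4) (ε * (r'/2) / (2*M + 1)) with hδ_def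
    have hδ : 0 < δ := lt_min (by linarith) (by positivity)
    have hmem : Metric.ball z₀ δ ∈ 𝓝[K] z₀ := nhdsWithin_le_nhds (ball_mem_nhds _ hδ)
    filter_upwards [hmem] with x hx n
    apply hεU
    rw [mem_ball, dist_eq_norm] at hx
    have hxr : ‖x - z₀‖ ≤ (r'/2)/2 := by
      have : δ ≤ r'/4 := min_le_left _ _
      linarith
    have hest := key_est Ω h hol M hM hr hball hxr n
    rw [Real.dist_eq]
    have h1 : ‖x - z₀‖ < ε * (r'/2) / (2*M + 1) := lt_of_lt_of_le hx (min_le_right _ _)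
    have h2 : 2 * M * (‖x - z₀‖ / (r'/2)) < ε := by
      rw [lt_div_iff₀ (by positivity : (0:ℝ) < 2*M+1)] at h1
      have heq : 2 * M * (‖x - z₀‖ / (r'/2)) = (2 * M * ‖x - z₀‖) / (r'/2) := by ring
      rw [heq, div_lt_iff₀ (by linarith : (0:ℝ) < r'/2)]
      nlinarith [norm_nonneg (x - z₀)]
    calc |F n z₀ - F n x| = |F n x - F n z₀| := abs_sub_comm _ _
      _ ≤ 2 * M * (‖x - z₀‖ / (r'/2)) := hest
      _ < ε := h2
  -- assemble via Ascoli-type result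
  have h𝔖c : ∀ K' ∈ ({K} : Set (Set V)), IsCompact K' := by
    intro K' hK'; rw [mem_singleton_iff] at hK'; subst hK'; exact hK
  have h𝔖e : ∀ K' ∈ ({K} : Set (Set V)), EquicontinuousOn F K' := by
    intro K' hK'; rw [mem_singleton_iff] at hK'; subst hK'; exact heqc
  have main := EquicontinuousOn.tendsto_uniformOnFun_iff_pi' h𝔖c h𝔖e Filter.atTop f
  have hRHS : Tendsto ((⋃₀ ({K} : Set (Set V))).restrict ∘ F) atTop
      (𝓝 ((⋃₀ ({K} : Set (Set V))).restrict f)) := by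
    rw [tendsto_pi_nhds]
    intro x
    exact hpt x.val (hKΩ (by simpa using x.2))
  have hLHS := main.mpr hRHS
  rw [UniformOnFun.tendsto_iff_tendstoUniformlyOn] at hLHS
  exact hLHS K rfl
end
end

section
/- For every θ < 1 there is a constant c > 1 such that for every q ∈ ℂ and every z ∈ l¹ with ‖z‖ < θ and only finitely many nonzero coordinates, Δ(q,z) ≤ max(1, |q|^{#z}) · e^{c·#z}. -/
open Set
open scoped ENNReal NNReal

noncomputable section

lemma knormN_eq (k : ℕ →₀ ℕ) : knormN k = ∑ ν ∈ k.support, k ν := rfl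

lemma le_knormN (k : ℕ →₀ ℕ) (ν : ℕ) : k ν ≤ knormN k := by
  by_cases h : k ν = 0
  · simp [h]
  · exact Finset.single_le_sum (fun i _ => Nat.zero_le _) (Finsupp.mem_support_iff.2 h)

lemma core_bound {θ : ℝ} (hθ0 : 0 ≤ θ) (z : ℕ → ℂ) (k : ℕ →₀ ℕ)
    (hz : ∑ ν ∈ k.support, ‖z ν‖ ≤ θ) :
    nn k / kk k * ∏ ν ∈ k.support, ‖z ν‖ ^ k ν ≤ θ ^ knormN k := by
  by_cases hk0 : k = 0
  · subst hk0; simp [nn, kk, knormN]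
  · have hn : knormN k ≠ 0 := by
      intro h
      apply hk0
      ext ν
      have := le_knormN k ν
      simp only [Finsupp.coe_zero, Pi.zero_apply]
      omega
    have hnR : (0:ℝ) < (knormN k : ℝ) := by exact_mod_cast Nat.pos_of_ne_zero hn
    have hkpos : ∀ ν ∈ k.support, (0:ℝ) < (k ν : ℝ) := fun ν hν => by
      exact_mod_cast Nat.pos_of_ne_zero (Finsupp.mem_support_iff.1 hν)
    set p : ℕ → ℝ := fun ν => (knormN k : ℝ) * ‖z ν‖ / (k ν : ℝ) with hpdef
    set w : ℕ → ℝ := fun ν => (k ν : ℝ) / (knormN k : ℝ) with hwdef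
    have hp : ∀ ν ∈ k.support, 0 ≤ p ν := fun ν hν =>
      div_nonneg (mul_nonneg hnR.le (norm_nonneg _)) (hkpos ν hν).le
    have hA : nn k / kk k * ∏ ν ∈ k.support, ‖z ν‖ ^ k ν
        = ∏ ν ∈ k.support, p ν ^ k ν := by
      have h1 : nn k = ∏ ν ∈ k.support, (knormN k : ℝ) ^ k ν := by
        rw [Finset.prod_pow_eq_pow_sum]
        rfl
      rw [h1, kk, ← Finset.prod_div_distrib, ← Finset.prod_mul_distrib]
      refine Finset.prod_congr rfl fun ν hν => ?_
      rw [hpdef, div_pow, mul_pow, div_mul_eq_mul_div]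
    have hG : ∏ ν ∈ k.support, p ν ^ w ν ≤ θ := by
      refine le_trans (Real.geom_mean_le_arith_mean_weighted _ w p
        (fun ν hν => div_nonneg (hkpos ν hν).le hnR.le) ?_ hp) ?_
      · rw [hwdef, ← Finset.sum_div, div_eq_one_iff_eq hnR.ne']
        norm_cast
      · refine le_trans (le_of_eq (Finset.sum_congr rfl fun ν hν => ?_)) hz
        have h1 : (k ν : ℝ) ≠ 0 := (hkpos ν hν).ne'
        have h2 : ((knormN k : ℕ) : ℝ) ≠ 0 := hnR.ne'
        rw [hwdef, hpdef]
        field_simp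
    have hGnn : 0 ≤ ∏ ν ∈ k.support, p ν ^ w ν :=
      Finset.prod_nonneg fun ν hν => Real.rpow_nonneg (hp ν hν) _
    rw [hA]
    calc ∏ ν ∈ k.support, p ν ^ k ν
        = (∏ ν ∈ k.support, p ν ^ w ν) ^ knormN k := by
          rw [← Finset.prod_pow]
          refine Finset.prod_congr rfl fun ν hν => ?_
          rw [← Real.rpow_natCast (p ν ^ w ν) (knormN k), ← Real.rpow_mul (hp ν hν)]
          have hwn : w ν * (knormN k : ℝ) = (k ν : ℝ) := div_mul_cancel₀ _ hnR.ne'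
          rw [hwn, Real.rpow_natCast]
      _ ≤ θ ^ knormN k := pow_le_pow_left₀ hGnn hG _

lemma DeltaTerm_le {θ : ℝ} (hθ0 : 0 ≤ θ) (q : ℂ) (z : ℕ → ℂ) (S : Finset ℕ)
    (hzS : ∀ ν, z ν ≠ 0 → ν ∈ S)
    (hsum : ∀ k : ℕ →₀ ℕ, ∑ ν ∈ k.support, ‖z ν‖ ≤ θ)
    (k : ℕ →₀ ℕ) :
    DeltaTerm q z k ≤ max 1 (‖q‖ ^ S.card) * (if k.support ⊆ S then θ ^ knormN k else 0) := by
  by_cases hks : k.support ⊆ S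
  · rw [if_pos hks]
    have hqb : ‖q‖ ^ k.support.card ≤ max 1 (‖q‖ ^ S.card) := by
      have hcard : k.support.card ≤ S.card := Finset.card_le_card hks
      rcases le_or_gt ‖q‖ 1 with h | h
      · exact le_trans (pow_le_one₀ (norm_nonneg q) h) (le_max_left _ _)
      · exact le_trans (pow_le_pow_right₀ h.le hcard) (le_max_right _ _)
    calc DeltaTerm q z k
        = (nn k / kk k * ∏ ν ∈ k.support, ‖z ν‖ ^ k ν) * ‖q‖ ^ k.support.card := by
          rw [DeltaTerm]; ring
      _ ≤ θ ^ knormN k * max 1 (‖q‖ ^ S.card) :=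
          mul_le_mul (core_bound hθ0 z k (hsum k)) hqb (pow_nonneg (norm_nonneg q) _)
            (pow_nonneg hθ0 _)
      _ = max 1 (‖q‖ ^ S.card) * θ ^ knormN k := mul_comm _ _
  · rw [if_neg hks]
    obtain ⟨ν, hν, hνS⟩ := Finset.not_subset.1 hks
    have hzν : z ν = 0 := by
      by_contra h
      exact hνS (hzS ν h)
    have hprod : ∏ ν ∈ k.support, ‖z ν‖ ^ k ν = 0 :=
      Finset.prod_eq_zero hν (by
        rw [hzν, norm_zero]
        exact zero_pow (Finsupp.mem_support_iff.1 hν))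
    simp only [DeltaTerm, hprod, mul_zero]
    exact le_refl 0


set_option maxHeartbeats 2000000 in
/-- For every `θ < 1` there is `c > 1` such that for every `q ∈ ℂ` and every
`z ∈ l¹` with `‖z‖ < θ` and finitely many nonzero coordinates,
`Δ(q,z) ≤ max(1,|q|^{#z})·e^{c·#z}`. -/
theorem statement5 (θ : ℝ) (hθ : θ < 1) :
    ∃ c : ℝ, 1 < c ∧
      ∀ (q : ℂ) (z : L1), ‖z‖ < θ → {ν : ℕ | z ν ≠ 0}.Finite →
        Delta q (fun ν => z ν) ≤
          max 1 (‖q‖ ^ {ν : ℕ | z ν ≠ 0}.ncard) *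
            Real.exp (c * {ν : ℕ | z ν ≠ 0}.ncard) := by
  classical
  refine ⟨max 2 (Real.log (1 - θ)⁻¹), lt_of_lt_of_le one_lt_two (le_max_left _ _),
    fun q z hz hfin => ?_⟩
  set c : ℝ := max 2 (Real.log (1 - θ)⁻¹) with hc
  set S : Finset ℕ := hfin.toFinset with hSdef
  have h1θ : 0 < 1 - θ := by linarith
  have hθ0 : 0 ≤ θ := le_trans (norm_nonneg z) hz.le
  have hN : {ν : ℕ | z ν ≠ 0}.ncard = S.card := by
    rw [hSdef]
    exact Set.ncard_eq_toFinset_card _ hfin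
  have hzS : ∀ ν : ℕ, (fun ν => z ν) ν ≠ 0 → ν ∈ S := fun ν h => hfin.mem_toFinset.2 h
  have hsumz : ∀ t : Finset ℕ, ∑ ν ∈ t, ‖z ν‖ ≤ ‖z‖ := by
    intro t
    have h := lp.sum_rpow_le_norm_rpow (p := 1) (by norm_num) z t
    simpa using h
  have hsum : ∀ k : ℕ →₀ ℕ, ∑ ν ∈ k.support, ‖(fun ν => z ν) ν‖ ≤ θ :=
    fun k => le_trans (hsumz k.support) hz.le
  set M : ℝ := max 1 (‖q‖ ^ S.card) with hMdef
  have hM0 : 0 ≤ M := le_trans zero_le_one (le_max_left _ _)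
  -- partial sums of the comparison function are bounded
  have hpartial : ∀ F : Finset (ℕ →₀ ℕ),
      ∑ k ∈ F, (if k.support ⊆ S then θ ^ knormN k else 0) ≤ ((1 - θ)⁻¹) ^ S.card := by
    intro F
    set B := F.sup knormN with hBdef
    rw [Finset.sum_ite, Finset.sum_const_zero, add_zero]
    set F' := F.filter (fun k => k.support ⊆ S) with hF'def
    have hθpow : ∀ k ∈ F', θ ^ knormN k = ∏ x ∈ S.attach, θ ^ k x.1 := by
      intro k hk
      have hks : k.support ⊆ S := (Finset.mem_filter.1 hk).2
      rw [Finset.prod_attach S (fun ν => θ ^ k ν), Finset.prod_pow_eq_pow_sum]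
      congr 1
      rw [knormN_eq]
      exact Finset.sum_subset hks (fun ν _ hν => Finsupp.notMem_support_iff.1 hν)
    have hinj : ∀ k ∈ F', ∀ k' ∈ F',
        (fun ν (_ : ν ∈ S) => k ν) = (fun ν (_ : ν ∈ S) => k' ν) → k = k' := by
      intro k hk k' hk' h
      ext ν
      by_cases hν : ν ∈ S
      · exact congrFun (congrFun h ν) hν
      · have h1 : k ν = 0 := by
          by_contra hcon
          exact hν ((Finset.mem_filter.1 hk).2 (Finsupp.mem_support_iff.2 hcon))
        have h2 : k' ν = 0 := by
          by_contra hcon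
          exact hν ((Finset.mem_filter.1 hk').2 (Finsupp.mem_support_iff.2 hcon))
        rw [h1, h2]
    have hsubset : F'.image (fun k => (fun ν (_ : ν ∈ S) => k ν)) ⊆
        S.pi (fun _ => Finset.range (B + 1)) := by
      intro pfn hpfn
      obtain ⟨k, hk, rfl⟩ := Finset.mem_image.1 hpfn
      rw [Finset.mem_pi]
      intro ν hν
      rw [Finset.mem_range]
      have h1 := le_knormN k ν
      have h2 : knormN k ≤ B := Finset.le_sup (Finset.mem_of_mem_filter _ hk)
      omega
    have hgeom : ∑ m ∈ Finset.range (B + 1), θ ^ m ≤ (1 - θ)⁻¹ :=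
      le_trans (Summable.sum_le_tsum (Finset.range (B + 1)) (fun m _ => pow_nonneg hθ0 m)
        (summable_geometric_of_lt_one hθ0 hθ))
        (le_of_eq (tsum_geometric_of_lt_one hθ0 hθ))
    calc ∑ k ∈ F', θ ^ knormN k
        = ∑ k ∈ F', ∏ x ∈ S.attach, θ ^ k x.1 := Finset.sum_congr rfl hθpow
      _ = ∑ pfn ∈ F'.image (fun k => (fun ν (_ : ν ∈ S) => k ν)),
            ∏ x ∈ S.attach, θ ^ pfn x.1 x.2 := (Finset.sum_image (f := fun (pfn : ∀ ν ∈ S, ℕ) => ∏ x ∈ S.attach, θ ^ pfn x.1 x.2) (g := fun (k : ℕ →₀ ℕ) ν (_ : ν ∈ S) => k ν) hinj).symm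
      _ ≤ ∑ pfn ∈ S.pi (fun _ => Finset.range (B + 1)),
            ∏ x ∈ S.attach, θ ^ pfn x.1 x.2 :=
          Finset.sum_le_sum_of_subset_of_nonneg hsubset
            (fun pfn _ _ => Finset.prod_nonneg fun x _ => pow_nonneg hθ0 _)
      _ = ∏ ν ∈ S, ∑ m ∈ Finset.range (B + 1), θ ^ m := (Finset.prod_sum S (fun _ => Finset.range (B + 1)) (fun _ m => θ ^ m)).symm
      _ ≤ ∏ _ν ∈ S, (1 - θ)⁻¹ :=
          Finset.prod_le_prod (fun _ _ => Finset.sum_nonneg fun m _ => pow_nonneg hθ0 m)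
            (fun _ _ => hgeom)
      _ = ((1 - θ)⁻¹) ^ S.card := Finset.prod_const _
  have hfinal : ∀ F : Finset (ℕ →₀ ℕ),
      ∑ k ∈ F, DeltaTerm q (fun ν => z ν) k ≤ M * ((1 - θ)⁻¹) ^ S.card := by
    intro F
    calc ∑ k ∈ F, DeltaTerm q (fun ν => z ν) k
        ≤ ∑ k ∈ F, M * (if k.support ⊆ S then θ ^ knormN k else 0) :=
          Finset.sum_le_sum fun k _ => DeltaTerm_le hθ0 q (fun ν => z ν) S hzS hsum k
      _ = M * ∑ k ∈ F, (if k.support ⊆ S then θ ^ knormN k else 0) :=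
          (Finset.mul_sum _ _ _).symm
      _ ≤ M * ((1 - θ)⁻¹) ^ S.card := mul_le_mul_of_nonneg_left (hpartial F) hM0
  have hDelta : Delta q (fun ν => z ν) ≤ M * ((1 - θ)⁻¹) ^ S.card :=
    tsum_le_of_sum_le' (mul_nonneg hM0 (pow_nonneg (inv_nonneg.2 h1θ.le) _)) hfinal
  refine le_trans hDelta ?_
  rw [hN]
  refine mul_le_mul_of_nonneg_left ?_ hM0
  have hAc : (1 - θ)⁻¹ ≤ Real.exp c := by
    rw [← Real.exp_log (inv_pos.2 h1θ)]
    exact Real.exp_le_exp.2 (le_max_right _ _)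
  calc ((1 - θ)⁻¹) ^ S.card ≤ (Real.exp c) ^ S.card :=
        pow_le_pow_left₀ (inv_nonneg.2 h1θ.le) hAc _
    _ = Real.exp (c * S.card) := by rw [mul_comm, Real.exp_nat_mul]
end
end

section
/- Let 0 < r < R < ∞, let (k_j)_{j≥1} be a sequence of multiindices, and let (c_j)_{j≥1} be complex numbers with inf_j |c_j|·r^{‖k_j‖} > 0. Suppose that for every sequence τ = (τ_ν) of reals with 0 ≤ τ_ν < R for all ν and τ_ν → 0, one has c_j·τ^{k_j} → 0 as j → ∞. Then for every sequence τ = (τ_ν) of nonnegative reals with τ_ν → 0 (with no upper bound assumed on the τ_ν), one has c_j·τ^{k_j} → 0 as j → ∞. -/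
open Set
open scoped ENNReal NNReal

noncomputable section

open Filter in
private lemma st15_prod_rpow_pow (S : Finset ℕ) (f : ℕ → ℝ) (hf : ∀ i ∈ S, 0 ≤ f i)
    (e : ℝ) (g : ℕ → ℕ) :
    ∏ i ∈ S, (f i ^ e) ^ g i = (∏ i ∈ S, f i ^ g i) ^ e := by
  rw [← Real.finset_prod_rpow S _ (fun i hi => pow_nonneg (hf i hi) _) e]
  refine Finset.prod_congr rfl fun i hi => ?_
  rw [← Real.rpow_natCast (f i ^ e) (g i), ← Real.rpow_mul (hf i hi), mul_comm,
    Real.rpow_mul (hf i hi), Real.rpow_natCast]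

private lemma st15_key (r R' T cn m : ℝ) (n D E : ℕ) (Q P : ℝ)
    (hr : 0 < r) (hrR' : r ≤ R') (hTR' : R' ≤ T)
    (hn : 0 < n) (hTn : T * r ^ n ≤ R' ^ (n + 1))
    (hc : 0 ≤ cn) (hm0 : 0 ≤ m) (hm : m ≤ cn * r ^ (D + E))
    (hQ0 : 0 ≤ Q) (hQ : Q ≤ T ^ D) (hP0 : 0 ≤ P) :
    cn * (Q * P) * m ^ n ≤
      (cn * (R' ^ D * ((r ^ E * P) ^ (2⁻¹ : ℝ)))) *
      (cn * (R' ^ D * ((r ^ ((1:ℝ) - (2 * (n:ℝ))⁻¹)) ^ E *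
        P ^ ((2 * (n:ℝ))⁻¹)))) ^ n := by
  have hR'0 : 0 < R' := lt_of_lt_of_le hr hrR'
  have hT0 : 0 < T := lt_of_lt_of_le hR'0 hTR'
  have hnR : (0:ℝ) < (n:ℝ) := by exact_mod_cast hn
  have hnne : (n:ℝ) ≠ 0 := ne_of_gt hnR
  set θ : ℝ := (2 * (n:ℝ))⁻¹ with hθ
  have hθn' : θ * (n:ℝ) = 2⁻¹ := by rw [hθ]; field_simp
  have hX3 : (P ^ θ) ^ n = P ^ (2⁻¹:ℝ) := by
    rw [← Real.rpow_natCast (P ^ θ) n, ← Real.rpow_mul hP0, hθn']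
  have hX2 : ((r ^ ((1:ℝ) - θ)) ^ E) ^ n = r ^ (((1:ℝ) - θ) * ((E * n : ℕ):ℝ)) := by
    rw [← pow_mul, ← Real.rpow_natCast (r ^ ((1:ℝ) - θ)) (E * n), ← Real.rpow_mul hr.le]
  have hX1 : (r ^ E * P) ^ (2⁻¹:ℝ) = r ^ ((E:ℝ) * 2⁻¹) * P ^ (2⁻¹:ℝ) := by
    rw [Real.mul_rpow (by positivity) hP0, ← Real.rpow_natCast r E, ← Real.rpow_mul hr.le]
  have hPP : P ^ (2⁻¹:ℝ) * P ^ (2⁻¹:ℝ) = P := by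
    rw [← Real.rpow_add' hP0 (by norm_num)]; norm_num
  have hrcomb : r ^ ((E:ℝ) * 2⁻¹) * r ^ (((1:ℝ) - θ) * ((E * n : ℕ):ℝ)) = r ^ (E * n) := by
    rw [← Real.rpow_add hr, ← Real.rpow_natCast r (E * n)]
    congr 1
    push_cast [hθ]
    field_simp
    ring
  have hstep : Q * r ^ (D * n) ≤ R' ^ (D * (n + 1)) := by
    calc Q * r ^ (D * n) ≤ T ^ D * r ^ (D * n) := by
          exact mul_le_mul_of_nonneg_right hQ (by positivity)
      _ = (T * r ^ n) ^ D := by rw [mul_pow, ← pow_mul, mul_comm n D]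
      _ ≤ (R' ^ (n + 1)) ^ D := pow_le_pow_left₀ (by positivity) hTn D
      _ = R' ^ (D * (n + 1)) := by rw [← pow_mul, mul_comm]
  have hRHSeq :
      (cn * (R' ^ D * ((r ^ E * P) ^ (2⁻¹ : ℝ)))) *
      (cn * (R' ^ D * ((r ^ ((1:ℝ) - θ)) ^ E * P ^ θ))) ^ n
      = R' ^ (D * (n + 1)) * (cn ^ (n + 1) * P * r ^ (E * n)) := by
    simp only [mul_pow]
    rw [hX1, hX3, hX2]
    rw [show D * (n + 1) = D + D * n by ring, pow_add, pow_mul]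
    set u := r ^ ((E:ℝ) * 2⁻¹) with hu
    set w := r ^ (((1:ℝ) - θ) * ((E * n : ℕ):ℝ)) with hw
    set v := P ^ (2⁻¹:ℝ) with hv
    rw [← hPP, ← hrcomb]
    ring
  calc cn * (Q * P) * m ^ n
      ≤ cn * (Q * P) * (cn * r ^ (D + E)) ^ n := by
        refine mul_le_mul_of_nonneg_left (pow_le_pow_left₀ hm0 hm n) (by positivity)
    _ = (Q * r ^ (D * n)) * (cn ^ (n + 1) * P * r ^ (E * n)) := by
        rw [mul_pow, ← pow_mul, show (D + E) * n = D * n + E * n by ring, pow_add, pow_succ]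
        ring
    _ ≤ R' ^ (D * (n + 1)) * (cn ^ (n + 1) * P * r ^ (E * n)) := by
        exact mul_le_mul_of_nonneg_right hstep (by positivity)
    _ = _ := hRHSeq.symm

/-- Let `0 < r < R < ∞`, `(k_j)` a sequence of multiindices and `(c_j)`
complex numbers with `inf_j |c_j| r^{‖k_j‖} > 0`. Suppose `c_j τ^{k_j} → 0` for every real
sequence `τ` with `0 ≤ τ_ν < R`, `τ_ν → 0`. Then `c_j τ^{k_j} → 0` for every nonnegative real
sequence `τ` with `τ_ν → 0`. -/
theorem statement15 (r R : ℝ) (hr : 0 < r) (hrR : r < R)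
    (k : ℕ → (ℕ →₀ ℕ)) (c : ℕ → ℂ)
    (hinf : 0 < ⨅ j : ℕ, ‖c j‖ * r ^ knormN (k j))
    (hyp : ∀ τ : ℕ → ℝ, (∀ ν, 0 ≤ τ ν) → (∀ ν, τ ν < R) →
      Filter.Tendsto τ Filter.atTop (nhds 0) →
      Filter.Tendsto (fun j => c j * ∏ ν ∈ (k j).support, ((τ ν : ℂ)) ^ (k j) ν)
        Filter.atTop (nhds 0)) :
    ∀ τ : ℕ → ℝ, (∀ ν, 0 ≤ τ ν) →
      Filter.Tendsto τ Filter.atTop (nhds 0) →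
      Filter.Tendsto (fun j => c j * ∏ ν ∈ (k j).support, ((τ ν : ℂ)) ^ (k j) ν)
        Filter.atTop (nhds 0) := by
  classical
  intro τ hτ0 hτtend
  set M : ℝ := ⨅ j : ℕ, ‖c j‖ * r ^ knormN (k j) with hM
  have hMpos : 0 < M := hinf
  have hbdd : BddBelow (Set.range fun j => ‖c j‖ * r ^ knormN (k j)) :=
    ⟨0, by rintro x ⟨j, rfl⟩; positivity⟩
  have hMle : ∀ j, M ≤ ‖c j‖ * r ^ knormN (k j) := fun j => ciInf_le hbdd j
  set R' : ℝ := (r + R) / 2 with hR'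
  have hrR' : r < R' := by rw [hR']; linarith
  have hR'R : R' < R := by rw [hR']; linarith
  have hR'pos : 0 < R' := lt_trans hr hrR'
  obtain ⟨T₀, hT₀⟩ := hτtend.bddAbove_range
  set T : ℝ := max T₀ R' with hT
  have hτT : ∀ ν, τ ν ≤ T := fun ν => le_trans (hT₀ ⟨ν, rfl⟩) (le_max_left _ _)
  have hR'T : R' ≤ T := le_max_right _ _
  have hTpos : 0 < T := lt_of_lt_of_le hR'pos hR'T
  have hone : (1:ℝ) < R' / r := by rw [lt_div_iff₀ hr]; linarith
  obtain ⟨n0, hn0⟩ := pow_unbounded_of_one_lt (T / R') hone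
  set n : ℕ := n0 + 1 with hn_def
  have hn : 0 < n := Nat.succ_pos n0
  have hTn : T * r ^ n ≤ R' ^ (n + 1) := by
    have h1 : T / R' < (R' / r) ^ n :=
      lt_of_lt_of_le hn0 (pow_le_pow_right₀ hone.le (Nat.le_succ n0))
    rw [div_pow, div_lt_div_iff₀ hR'pos (pow_pos hr n)] at h1
    calc T * r ^ n ≤ R' ^ n * R' := h1.le
      _ = R' ^ (n + 1) := (pow_succ R' n).symm
  have hnR : (0:ℝ) < (n:ℝ) := by exact_mod_cast hn
  set θ : ℝ := (2 * (n:ℝ))⁻¹ with hθ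
  have hθpos : 0 < θ := by rw [hθ]; positivity
  have hθ1 : θ ≤ 1 := by
    rw [hθ]
    have h2 : (1:ℝ) ≤ 2 * (n:ℝ) := by
      have h3 : (1:ℝ) ≤ (n:ℝ) := by exact_mod_cast hn
      linarith
    calc (2 * (n:ℝ))⁻¹ ≤ 1⁻¹ := by
          exact inv_anti₀ one_pos h2
      _ = 1 := inv_one
  -- the two test sequences
  set σa : ℕ → ℝ := fun ν => if r < τ ν then R' else (r * τ ν) ^ (2⁻¹:ℝ) with hσa
  set σb : ℕ → ℝ := fun ν => if r < τ ν then R' else r ^ ((1:ℝ) - θ) * τ ν ^ θ with hσb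
  have hσa0 : ∀ ν, 0 ≤ σa ν := by
    intro ν; rw [hσa]; dsimp only
    split_ifs
    · exact hR'pos.le
    · exact Real.rpow_nonneg (mul_nonneg hr.le (hτ0 ν)) _
  have hσb0 : ∀ ν, 0 ≤ σb ν := by
    intro ν; rw [hσb]; dsimp only
    split_ifs
    · exact hR'pos.le
    · exact mul_nonneg (Real.rpow_nonneg hr.le _) (Real.rpow_nonneg (hτ0 ν) _)
  have hσaR : ∀ ν, σa ν < R := by
    intro ν; rw [hσa]; dsimp only
    split_ifs with h
    · exact hR'R
    · have hle : τ ν ≤ r := not_lt.mp h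
      have h1 : (r * τ ν) ^ (2⁻¹:ℝ) ≤ (r * r) ^ (2⁻¹:ℝ) :=
        Real.rpow_le_rpow (mul_nonneg hr.le (hτ0 ν)) (by nlinarith [hτ0 ν]) (by norm_num)
      have heq : ((r * r):ℝ) ^ (2⁻¹:ℝ) = r := by
        rw [show r * r = r ^ (2:ℕ) by ring, ← Real.rpow_natCast r 2,
          ← Real.rpow_mul hr.le]
        norm_num
      rw [heq] at h1
      linarith
  have hσbR : ∀ ν, σb ν < R := by
    intro ν; rw [hσb]; dsimp only
    split_ifs with h
    · exact hR'R
    · have hle : τ ν ≤ r := not_lt.mp h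
      have h3 : τ ν ^ θ ≤ r ^ θ := Real.rpow_le_rpow (hτ0 ν) hle hθpos.le
      have h4 : r ^ ((1:ℝ) - θ) * r ^ θ = r := by
        rw [← Real.rpow_add hr, sub_add_cancel, Real.rpow_one]
      have h5 : r ^ ((1:ℝ) - θ) * τ ν ^ θ ≤ r ^ ((1:ℝ) - θ) * r ^ θ :=
        mul_le_mul_of_nonneg_left h3 (Real.rpow_nonneg hr.le _)
      rw [h4] at h5
      linarith
  have hev : ∀ᶠ ν in Filter.atTop, ¬ r < τ ν := by
    filter_upwards [hτtend.eventually (gt_mem_nhds hr)] with ν hν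
    exact not_lt.mpr hν.le
  have hσatend : Filter.Tendsto σa Filter.atTop (nhds 0) := by
    have h2 : Filter.Tendsto (fun ν => r * τ ν) Filter.atTop (nhds 0) := by
      simpa using hτtend.const_mul r
    have h1 : Filter.Tendsto (fun ν => (r * τ ν) ^ (2⁻¹:ℝ)) Filter.atTop (nhds 0) := by
      have := h2.rpow_const (Or.inr (by norm_num : (0:ℝ) ≤ 2⁻¹))
      simpa [Real.zero_rpow (show (2⁻¹:ℝ) ≠ 0 by norm_num)] using this
    refine h1.congr' ?_
    filter_upwards [hev] with ν hν
    rw [hσa]; dsimp only; rw [if_neg hν]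
  have hσbtend : Filter.Tendsto σb Filter.atTop (nhds 0) := by
    have h2 := hτtend.rpow_const (Or.inr hθpos.le)
    rw [Real.zero_rpow hθpos.ne'] at h2
    have h1 : Filter.Tendsto (fun ν => r ^ ((1:ℝ) - θ) * τ ν ^ θ)
        Filter.atTop (nhds 0) := by
      simpa using h2.const_mul (r ^ ((1:ℝ) - θ))
    refine h1.congr' ?_
    filter_upwards [hev] with ν hν
    rw [hσb]; dsimp only; rw [if_neg hν]
  -- norms of the terms
  have hnorm : ∀ (σ : ℕ → ℝ), (∀ ν, 0 ≤ σ ν) → ∀ j,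
      ‖c j * ∏ ν ∈ (k j).support, ((σ ν : ℂ)) ^ (k j) ν‖
        = ‖c j‖ * ∏ ν ∈ (k j).support, σ ν ^ (k j) ν := by
    intro σ hσ j
    rw [norm_mul, norm_prod]
    congr 1
    refine Finset.prod_congr rfl fun ν _ => ?_
    rw [norm_pow, Complex.norm_real, Real.norm_of_nonneg (hσ ν)]
  set A : ℕ → ℝ := fun j => ‖c j‖ * ∏ ν ∈ (k j).support, σa ν ^ (k j) ν with hA
  set B : ℕ → ℝ := fun j => ‖c j‖ * ∏ ν ∈ (k j).support, σb ν ^ (k j) ν with hB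
  have hA0 : Filter.Tendsto A Filter.atTop (nhds 0) := by
    have h := (hyp σa hσa0 hσaR hσatend).norm
    rw [norm_zero] at h
    exact h.congr fun j => hnorm σa hσa0 j
  have hB0 : Filter.Tendsto B Filter.atTop (nhds 0) := by
    have h := (hyp σb hσb0 hσbR hσbtend).norm
    rw [norm_zero] at h
    exact h.congr fun j => hnorm σb hσb0 j
  -- pointwise bound
  have hbound : ∀ j, ‖c j‖ * ∏ ν ∈ (k j).support, τ ν ^ (k j) ν
      ≤ (A j * B j ^ n) / M ^ n := by
    intro j
    rw [le_div_iff₀ (by positivity : (0:ℝ) < M ^ n)]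
    set S := (k j).support with hS
    set p : ℕ → Prop := fun ν => r < τ ν with hp
    set D := ∑ ν ∈ S.filter p, k j ν with hD
    set E := ∑ ν ∈ S.filter (fun ν => ¬ p ν), k j ν with hE
    set Q := ∏ ν ∈ S.filter p, τ ν ^ k j ν with hQ
    set P := ∏ ν ∈ S.filter (fun ν => ¬ p ν), τ ν ^ k j ν with hP
    have hsplitτ : ∏ ν ∈ S, τ ν ^ k j ν = Q * P :=
      (Finset.prod_filter_mul_prod_filter_not S p _).symm
    have hsplitA : ∏ ν ∈ S, σa ν ^ k j ν = R' ^ D * ((r ^ E * P) ^ (2⁻¹:ℝ)) := by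
      rw [← Finset.prod_filter_mul_prod_filter_not S p]
      congr 1
      · have h1 : ∀ ν ∈ S.filter p, σa ν ^ k j ν = R' ^ k j ν := by
          intro ν hν
          have hpν : p ν := (Finset.mem_filter.mp hν).2
          rw [hσa]; dsimp only; rw [if_pos hpν]
        rw [Finset.prod_congr rfl h1, Finset.prod_pow_eq_pow_sum]
      · calc ∏ ν ∈ S.filter (fun ν => ¬ p ν), σa ν ^ k j ν
            = ∏ ν ∈ S.filter (fun ν => ¬ p ν), ((r * τ ν) ^ (2⁻¹:ℝ)) ^ k j ν := by
              refine Finset.prod_congr rfl fun ν hν => ?_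
              rw [hσa]; dsimp only
              rw [if_neg ((Finset.mem_filter.mp hν).2 : ¬ p ν)]
          _ = (∏ ν ∈ S.filter (fun ν => ¬ p ν), (r * τ ν) ^ k j ν) ^ (2⁻¹:ℝ) :=
              st15_prod_rpow_pow _ _ (fun ν _ => mul_nonneg hr.le (hτ0 ν)) _ _
          _ = (r ^ E * P) ^ (2⁻¹:ℝ) := by
              congr 1
              rw [Finset.prod_congr rfl (fun ν _ => mul_pow r (τ ν) (k j ν)),
                Finset.prod_mul_distrib, Finset.prod_pow_eq_pow_sum]
    have hsplitB : ∏ ν ∈ S, σb ν ^ k j ν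
        = R' ^ D * ((r ^ ((1:ℝ) - θ)) ^ E * P ^ θ) := by
      rw [← Finset.prod_filter_mul_prod_filter_not S p]
      congr 1
      · have h1 : ∀ ν ∈ S.filter p, σb ν ^ k j ν = R' ^ k j ν := by
          intro ν hν
          have hpν : p ν := (Finset.mem_filter.mp hν).2
          rw [hσb]; dsimp only; rw [if_pos hpν]
        rw [Finset.prod_congr rfl h1, Finset.prod_pow_eq_pow_sum]
      · calc ∏ ν ∈ S.filter (fun ν => ¬ p ν), σb ν ^ k j ν
            = ∏ ν ∈ S.filter (fun ν => ¬ p ν),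
                (r ^ ((1:ℝ) - θ) * τ ν ^ θ) ^ k j ν := by
              refine Finset.prod_congr rfl fun ν hν => ?_
              rw [hσb]; dsimp only
              rw [if_neg ((Finset.mem_filter.mp hν).2 : ¬ p ν)]
          _ = (r ^ ((1:ℝ) - θ)) ^ E * P ^ θ := by
              rw [Finset.prod_congr rfl
                  (fun ν _ => mul_pow (r ^ ((1:ℝ) - θ)) (τ ν ^ θ) (k j ν)),
                Finset.prod_mul_distrib, Finset.prod_pow_eq_pow_sum,
                st15_prod_rpow_pow _ _ (fun ν _ => hτ0 ν) _ _]
    have hDE : knormN (k j) = D + E := by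
      rw [show knormN (k j) = ∑ ν ∈ S, k j ν from rfl,
        ← Finset.sum_filter_add_sum_filter_not S p (k j)]
    have hQle : Q ≤ T ^ D := by
      rw [hQ, hD, ← Finset.prod_pow_eq_pow_sum]
      exact Finset.prod_le_prod (fun ν _ => pow_nonneg (hτ0 ν) _)
        (fun ν _ => pow_le_pow_left₀ (hτ0 ν) (hτT ν) _)
    have hmj : M ≤ ‖c j‖ * r ^ (D + E) := by
      have := hMle j
      rwa [hDE] at this
    have := st15_key r R' T (‖c j‖) M n D E Q P hr hrR'.le hR'T hn hTn
      (norm_nonneg _) hMpos.le hmj (Finset.prod_nonneg fun ν _ => pow_nonneg (hτ0 ν) _) hQle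
      (Finset.prod_nonneg fun ν _ => pow_nonneg (hτ0 ν) _)
    rw [hsplitτ, hA, hB]
    dsimp only
    rw [hsplitA, hsplitB]
    exact this
  -- conclude
  rw [tendsto_zero_iff_norm_tendsto_zero]
  have hlim : Filter.Tendsto (fun j => (A j * B j ^ n) / M ^ n)
      Filter.atTop (nhds 0) := by
    have h1 : Filter.Tendsto (fun j => A j * B j ^ n) Filter.atTop (nhds 0) := by
      have := hA0.mul (hB0.pow n)
      simpa [zero_pow hn.ne'] using this
    simpa using h1.div_const (M ^ n)
  refine squeeze_zero (fun j => norm_nonneg _) (fun j => ?_) hlim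
  rw [hnorm τ hτ0 j]
  exact hbound j
end
end

section
/- Let p ≥ 1 be an integer. The function g on the open unit disc {ζ ∈ ℂ : |ζ| < 1} defined by g(ζ) = ζ^p/(conj(ζ)·log|ζ|²) for ζ ≠ 0 and g(0) = 0 is of class C^{p−1} in the real sense (i.e., (p−1) times continuously differentiable as a function of two real variables) on the open unit disc. -/
open Set
open scoped ENNReal NNReal

noncomputable section

section Statement18Aux

open Metric Complex

noncomputable def idR : ℂ →L[ℝ] ℂ := ContinuousLinearMap.id ℝ ℂ
noncomputable def conjR : ℂ →L[ℝ] ℂ := Complex.conjCLE.toContinuousLinearMap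

noncomputable def Ls (ζ : ℂ) : ℂ := ((Real.log (‖ζ‖ ^ 2) : ℝ) : ℂ)

lemma hasFDerivAt_nsq (ζ : ℂ) :
    HasFDerivAt (fun w : ℂ => ‖w‖ ^ 2)
      (ζ.re • Complex.reCLM + ζ.re • Complex.reCLM
        + (ζ.im • Complex.imCLM + ζ.im • Complex.imCLM)) ζ := by
  have h : (fun w : ℂ => ‖w‖ ^ 2) = fun w : ℂ => w.re * w.re + w.im * w.im := by
    funext w; rw [Complex.sq_norm, Complex.normSq_apply]
  rw [h]
  exact (Complex.reCLM.hasFDerivAt.mul Complex.reCLM.hasFDerivAt).add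
    (Complex.imCLM.hasFDerivAt.mul Complex.imCLM.hasFDerivAt)

lemma hasFDerivAt_Ls {ζ : ℂ} (h0 : ζ ≠ 0) :
    HasFDerivAt Ls (ζ⁻¹ • idR + ((starRingEnd ℂ) ζ)⁻¹ • conjR) ζ := by
  have hn : (‖ζ‖ ^ 2 : ℝ) ≠ 0 := pow_ne_zero _ (norm_ne_zero_iff.2 h0)
  have h1 := hasFDerivAt_nsq ζ
  have h2 := (Real.hasDerivAt_log hn).comp_hasFDerivAt ζ h1
  have h3 := Complex.ofRealCLM.hasFDerivAt.comp ζ h2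
  have hfun : Ls = Complex.ofRealCLM ∘ (Real.log ∘ fun w : ℂ => ‖w‖ ^ 2) := by
    funext w; simp [Ls, Function.comp]
  rw [hfun]
  refine h3.congr_fderiv ?_
  ext ξ
  have hns : Complex.normSq ζ = ‖ζ‖ ^ 2 := by
    rw [Complex.sq_norm]
  simp only [ContinuousLinearMap.add_apply, ContinuousLinearMap.coe_comp',
    ContinuousLinearMap.coe_smul', Pi.smul_apply, Function.comp_apply,
    ContinuousLinearMap.smul_apply, idR, conjR, ContinuousLinearMap.id_apply,
    ContinuousLinearEquiv.coe_coe, Complex.conjCLE_apply, Complex.reCLM_apply,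
    Complex.imCLM_apply, Complex.ofRealCLM_apply, smul_eq_mul]
  rw [Complex.inv_def, Complex.inv_def, hns]
  have habs : (‖ζ‖ : ℝ) ^ 2 = ζ.re ^ 2 + ζ.im ^ 2 := by
    rw [Complex.sq_norm, Complex.normSq_apply]; ring
  have hns2 : ζ.re ^ 2 + ζ.im ^ 2 ≠ 0 := by
    rw [← habs]; simpa using hn
  apply Complex.ext <;>
    simp only [Complex.mul_re, Complex.mul_im, Complex.add_re, Complex.add_im,
      ← Complex.ofReal_pow, Complex.ofReal_re, Complex.ofReal_im,
      Complex.conj_re, Complex.conj_im, Complex.inv_re, Complex.inv_im,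
      Complex.normSq_apply, habs] <;>
    field_simp <;> ring

noncomputable def FF (a b e : ℤ) (ζ : ℂ) : ℂ :=
  if ζ = 0 then 0 else ζ ^ a * (starRingEnd ℂ) ζ ^ b * Ls ζ ^ e

lemma Ls_ne' {ζ : ℂ} (h0 : ζ ≠ 0) (h1 : ‖ζ‖ < 1) : Ls ζ ≠ 0 := by
  have : Real.log (‖ζ‖ ^ 2) < 0 := by
    apply Real.log_neg
    · have := norm_pos_iff.2 h0; positivity
    · nlinarith [norm_nonneg ζ]
  simpa [Ls, Complex.ofReal_eq_zero] using this.ne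

lemma hasFDerivAt_zpow_c {m : ℤ} {w : ℂ} (hw : w ≠ 0) :
    HasFDerivAt (fun z : ℂ => z ^ m) (((m : ℂ) * w ^ (m - 1)) • idR) w := by
  have h := (hasDerivAt_zpow m w (Or.inl hw)).hasFDerivAt.restrictScalars ℝ
  refine h.congr_fderiv ?_
  ext ξ
  simp [idR, mul_comm]

lemma hasFDerivAt_conj : ∀ ζ : ℂ, HasFDerivAt (fun w : ℂ => (starRingEnd ℂ) w) conjR ζ := by
  intro ζ
  have := Complex.conjCLE.toContinuousLinearMap.hasFDerivAt (x := ζ)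
  exact this

lemma hasFDerivAt_FF {a b e : ℤ} {ζ : ℂ} (h0 : ζ ≠ 0) (h1 : ‖ζ‖ < 1) :
    HasFDerivAt (FF a b e)
      ((((a:ℂ) * FF (a-1) b e ζ + (e:ℂ) * FF (a-1) b (e-1) ζ) • idR)
        + (((b:ℂ) * FF a (b-1) e ζ + (e:ℂ) * FF a (b-1) (e-1) ζ) • conjR)) ζ := by
  have hc0 : (starRingEnd ℂ) ζ ≠ 0 := by simpa using h0
  have hL : Ls ζ ≠ 0 := Ls_ne' h0 h1
  -- pieces
  have hza := hasFDerivAt_zpow_c (m := a) h0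
  have hzb : HasFDerivAt (fun w : ℂ => (starRingEnd ℂ) w ^ b)
      ((((b : ℂ) * ((starRingEnd ℂ) ζ) ^ (b - 1)) • idR).comp conjR) ζ :=
    (hasFDerivAt_zpow_c (m := b) hc0).comp ζ (hasFDerivAt_conj ζ)
  have hLp : HasFDerivAt (fun w : ℂ => Ls w ^ e)
      ((((e : ℂ) * (Ls ζ) ^ (e - 1)) • idR).comp
        (ζ⁻¹ • idR + ((starRingEnd ℂ) ζ)⁻¹ • conjR)) ζ :=
    (hasFDerivAt_zpow_c (m := e) hL).comp ζ (hasFDerivAt_Ls h0)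
  have hprod := (hza.mul hzb).mul hLp
  have heq : FF a b e =ᶠ[nhds ζ]
      fun w => w ^ a * (starRingEnd ℂ) w ^ b * Ls w ^ e := by
    filter_upwards [isOpen_compl_singleton.mem_nhds h0] with w hw
    simp only [Set.mem_compl_iff, Set.mem_singleton_iff] at hw
    simp [FF, hw]
  apply (HasFDerivAt.congr_of_eventuallyEq _ heq)
  refine hprod.congr_fderiv ?_
  ext ξ
  simp only [FF, h0, if_false, ContinuousLinearMap.add_apply,
    ContinuousLinearMap.smul_apply, ContinuousLinearMap.coe_comp',
    Function.comp_apply, ContinuousLinearMap.coe_smul', Pi.smul_apply,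
    idR, conjR, ContinuousLinearMap.id_apply, ContinuousLinearEquiv.coe_coe,
    Complex.conjCLE_apply, smul_eq_mul]
  rw [zpow_sub_one₀ h0, zpow_sub_one₀ hc0, zpow_sub_one₀ hL]
  field_simp
  simp only [Pi.mul_apply]
  ring

lemma norm_FF' {a b e : ℤ} {ζ : ℂ} (h0 : ζ ≠ 0) :
    ‖FF a b e ζ‖ = ‖ζ‖ ^ (a + b) * ‖Ls ζ‖ ^ e := by
  have hz : ‖ζ‖ ≠ 0 := by simpa using h0
  rw [zpow_add₀ hz]
  simp [FF, h0, norm_zpow, mul_assoc, mul_comm, mul_left_comm]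

lemma norm_FF_le' {a b e : ℤ} (hab : 0 ≤ a + b) {ζ : ℂ} (h1 : ‖ζ‖ < 1) :
    ‖FF a b e ζ‖ ≤ ‖Ls ζ‖ ^ e := by
  rcases eq_or_ne ζ 0 with rfl | h0
  · rw [show FF a b e 0 = 0 by simp [FF], norm_zero]
    exact zpow_nonneg (norm_nonneg _) _
  · rw [norm_FF' h0]
    have h2 : ‖ζ‖ ^ (a + b) ≤ 1 := by
      lift a + b to ℕ using hab with n hn
      rw [zpow_natCast]
      exact pow_le_one₀ (norm_nonneg ζ) h1.le
    have h3 : (0:ℝ) ≤ ‖Ls ζ‖ ^ e := zpow_nonneg (norm_nonneg _) _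
    nlinarith [zpow_nonneg (norm_nonneg ζ) (a+b)]

lemma tendsto_Ls_zpow2 {e : ℤ} (he : e ≤ -1) :
    Filter.Tendsto (fun ζ : ℂ => ‖Ls ζ‖ ^ e) (nhds 0) (nhds 0) := by
  rw [← nhdsNE_sup_pure (0 : ℂ), Filter.tendsto_sup]
  constructor
  · have h1 : Filter.Tendsto (fun ζ : ℂ => ‖ζ‖ ^ 2) (nhdsWithin 0 {(0:ℂ)}ᶜ)
        (nhdsWithin 0 {(0:ℝ)}ᶜ) := by
      rw [tendsto_nhdsWithin_iff]
      constructor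
      · have : Filter.Tendsto (fun ζ : ℂ => ‖ζ‖ ^ 2) (nhds 0) (nhds 0) := by
          have : Continuous fun ζ : ℂ => ‖ζ‖ ^ 2 := (continuous_norm (E := ℂ)).pow 2
          simpa using this.tendsto 0
        exact this.mono_left nhdsWithin_le_nhds
      · filter_upwards [self_mem_nhdsWithin] with ζ hζ
        simp only [mem_compl_iff, mem_singleton_iff] at hζ ⊢
        exact pow_ne_zero _ (norm_ne_zero_iff.2 hζ)
    have h2 : Filter.Tendsto (fun ζ : ℂ => ‖Ls ζ‖) (nhdsWithin 0 {(0:ℂ)}ᶜ)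
        Filter.atTop := by
      have : (fun ζ : ℂ => ‖Ls ζ‖) = fun ζ : ℂ => |Real.log (‖ζ‖ ^ 2)| := by
        funext ζ; rw [Ls, Complex.norm_real, Real.norm_eq_abs]
      rw [this]
      exact Filter.tendsto_abs_atBot_atTop.comp (Real.tendsto_log_nhdsNE_zero.comp h1)
    exact (tendsto_zpow_atTop_zero (by omega : e < 0)).comp h2
  · have : Ls (0 : ℂ) = 0 := by simp [Ls]
    simp only [Filter.tendsto_pure_left, this]
    intro s hs
    have : (0:ℝ) ^ e = 0 := zero_zpow e (by omega)
    simpa [this] using mem_of_mem_nhds hs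

lemma tendsto_Ls_zpow' {e : ℤ} (he : e ≤ -1) :
    Filter.Tendsto (fun ζ : ℂ => ‖Ls ζ‖ ^ e) (nhds 0) (nhds 0) := tendsto_Ls_zpow2 he

lemma hasFDerivAt_FF_zero {a b e : ℤ} (hab : 1 ≤ a + b) (he : e ≤ -1) :
    HasFDerivAt (FF a b e) (0 : ℂ →L[ℝ] ℂ) 0 := by
  rw [hasFDerivAt_iff_tendsto]
  have hF0 : FF a b e 0 = 0 := by simp [FF]
  apply squeeze_zero' (g := fun ζ : ℂ => ‖Ls ζ‖ ^ e) _ _ (tendsto_Ls_zpow' he)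
  · filter_upwards with ζ; positivity
  · filter_upwards [Metric.ball_mem_nhds (0:ℂ) one_pos] with ζ hζ
    have h1 : ‖ζ‖ < 1 := by simpa using hζ
    rcases eq_or_ne ζ 0 with rfl | h0
    · simp [hF0]
      positivity
    · have hz : ‖ζ‖ ≠ 0 := by simpa using h0
      have key : ‖ζ - 0‖⁻¹ * ‖FF a b e ζ - FF a b e 0 - (0 : ℂ →L[ℝ] ℂ) (ζ - 0)‖
          = ‖FF (a-1) b e ζ‖ := by
        rw [hF0]
        simp only [sub_zero, ContinuousLinearMap.zero_apply]
        rw [norm_FF' h0, norm_FF' h0]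
        have : a - 1 + b = a + b - 1 := by ring
        rw [this, zpow_sub_one₀ hz]
        ring
      rw [key]
      exact norm_FF_le' (by omega) h1

noncomputable def TT : ℂ →L[ℝ] (ℂ →L[ℝ] ℂ) := ContinuousLinearMap.mul ℝ ℂ
noncomputable def UU : ℂ →L[ℝ] (ℂ →L[ℝ] ℂ) :=
  ((ContinuousLinearMap.compL ℝ ℂ ℂ ℂ).flip conjR).comp TT

lemma continuousAt_Ls {ζ : ℂ} (h0 : ζ ≠ 0) : ContinuousAt Ls ζ := by
  have h1 : ContinuousAt (fun x : ℂ => ‖x‖ ^ 2) ζ :=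
    ((continuous_norm (E := ℂ)).pow 2).continuousAt
  have h2 : ContinuousAt Real.log (‖ζ‖ ^ 2) :=
    Real.continuousAt_log (pow_ne_zero _ (norm_ne_zero_iff.2 h0))
  exact Complex.continuous_ofReal.continuousAt.comp
    (ContinuousAt.comp (f := fun x : ℂ => ‖x‖ ^ 2) h2 h1)

lemma continuousAt_FF_ne {a b e : ℤ} {ζ : ℂ} (h0 : ζ ≠ 0) (h1 : ‖ζ‖ < 1) :
    ContinuousAt (FF a b e) ζ := by
  have hopen : IsOpen {w : ℂ | w ≠ 0} := isOpen_compl_singleton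
  have heq : FF a b e =ᶠ[nhds ζ] fun w => w ^ a * (starRingEnd ℂ) w ^ b * Ls w ^ e := by
    filter_upwards [hopen.mem_nhds h0] with w hw
    simp [FF, hw]
  apply ContinuousAt.congr _ heq.symm
  apply ContinuousAt.mul
  apply ContinuousAt.mul
  · exact continuousAt_id.zpow₀ _ (Or.inl h0)
  · exact (Complex.continuous_conj.continuousAt).zpow₀ _
      (Or.inl (by simpa using h0))
  · exact (continuousAt_Ls h0).zpow₀ _ (Or.inl (Ls_ne' h0 h1))

lemma continuousAt_FF_zero2 {a b e : ℤ} (hab : 0 ≤ a + b) (he : e ≤ -1) :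
    ContinuousAt (FF a b e) 0 := by
  rw [ContinuousAt]
  have hF0 : FF a b e 0 = 0 := by simp [FF]
  rw [hF0]
  apply squeeze_zero_norm' _ (tendsto_Ls_zpow2 he)
  filter_upwards [Metric.ball_mem_nhds (0:ℂ) one_pos] with ζ hζ
  exact norm_FF_le' hab (by simpa using hζ)

lemma continuousOn_FF2 {a b e : ℤ} (hab : 0 ≤ a + b) (he : e ≤ -1) :
    ContinuousOn (FF a b e) (ball (0:ℂ) 1) := by
  intro ζ hζ
  rcases eq_or_ne ζ 0 with rfl | h0
  · exact (continuousAt_FF_zero2 hab he).continuousWithinAt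
  · exact (continuousAt_FF_ne h0 (by simpa using hζ)).continuousWithinAt

lemma continuousOn_FF' {a b e : ℤ} (hab : 0 ≤ a + b) (he : e ≤ -1) :
    ContinuousOn (FF a b e) (ball (0:ℂ) 1) := continuousOn_FF2 hab he

lemma contDiffOn_FF : ∀ (n : ℕ) (a b e : ℤ), (n : ℤ) ≤ a + b → e ≤ -1 →
    ContDiffOn ℝ n (FF a b e) (ball (0:ℂ) 1) := by
  intro n
  induction n with
  | zero =>
    intro a b e hab he
    rw [show ((0:ℕ) : WithTop ℕ∞) = 0 from rfl, contDiffOn_zero]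
    exact continuousOn_FF' (by exact_mod_cast hab) he
  | succ n ih =>
    intro a b e hab he
    set A : ℂ → ℂ := fun ζ => (a:ℂ) * FF (a-1) b e ζ + (e:ℂ) * FF (a-1) b (e-1) ζ with hA
    set B : ℂ → ℂ := fun ζ => (b:ℂ) * FF a (b-1) e ζ + (e:ℂ) * FF a (b-1) (e-1) ζ with hB
    have hdiff : ∀ ζ ∈ ball (0:ℂ) 1, HasFDerivAt (FF a b e) (TT (A ζ) + UU (B ζ)) ζ := by
      intro ζ hζ
      have h1 : ‖ζ‖ < 1 := by simpa using hζ
      rcases eq_or_ne ζ 0 with rfl | h0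
      · have hA0 : A 0 = 0 := by simp [hA, FF]
        have hB0 : B 0 = 0 := by simp [hB, FF]
        rw [hA0, hB0]
        simpa using hasFDerivAt_FF_zero (by omega) he
      · have hd := hasFDerivAt_FF (a := a) (b := b) (e := e) h0 h1
        have hEq : TT (A ζ) + UU (B ζ) = (A ζ) • idR + (B ζ) • conjR := by
          ext ξ
          simp [TT, UU, idR, conjR, ContinuousLinearMap.mul_apply']
        rw [hEq]
        exact hd
    have hcast : ((n+1 : ℕ) : WithTop ℕ∞) = (n : WithTop ℕ∞) + 1 := by push_cast; rfl
    rw [hcast, contDiffOn_succ_iff_fderiv_of_isOpen Metric.isOpen_ball]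
    refine ⟨fun ζ hζ => (hdiff ζ hζ).differentiableAt.differentiableWithinAt, ?_, ?_⟩
    · intro h; exact absurd h (by simp)
    · have hAd : ContDiffOn ℝ n A (ball (0:ℂ) 1) :=
        (contDiffOn_const.mul (ih (a-1) b e (by omega) he)).add
          (contDiffOn_const.mul (ih (a-1) b (e-1) (by omega) (by omega)))
      have hBd : ContDiffOn ℝ n B (ball (0:ℂ) 1) :=
        (contDiffOn_const.mul (ih a (b-1) e (by omega) he)).add
          (contDiffOn_const.mul (ih a (b-1) (e-1) (by omega) (by omega)))
      have hΦ : ContDiffOn ℝ n (fun ζ => TT (A ζ) + UU (B ζ)) (ball (0:ℂ) 1) :=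
        (TT.contDiff.comp_contDiffOn hAd).add (UU.contDiff.comp_contDiffOn hBd)
      exact hΦ.congr fun ζ hζ => (hdiff ζ hζ).fderiv

/-- For any integer `p ≥ 1` the function `g(ζ) = ζ^p/(conj(ζ)·log|ζ|²)`
(with `g(0) = 0`) is of class `C^{p−1}` in the real sense on the open unit disc. -/
theorem statement18 (p : ℕ) (hp : 1 ≤ p) :
    ContDiffOn ℝ ((p - 1 : ℕ))
      (fun ζ : ℂ =>
        if ζ = 0 then 0
        else ζ ^ p / ((starRingEnd ℂ) ζ * ((Real.log (‖ζ‖ ^ 2) : ℝ) : ℂ)))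
      (Metric.ball (0 : ℂ) 1) := by
  have h := contDiffOn_FF (p - 1) (p : ℤ) (-1) (-1) (by omega) (by omega)
  apply h.congr
  intro ζ hζ
  rcases eq_or_ne ζ 0 with rfl | h0
  · simp [FF]
  · simp only [FF, h0, if_false, Ls, zpow_neg, zpow_one, zpow_natCast,
      div_eq_mul_inv, mul_inv, mul_assoc]

end Statement18Aux
end
end
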